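/- arXiv:2312.04505 — 4 statements merged into one kernel-verified Lean document; each statement's English description precedes it below -/
import Mathlib

section
/- Let χ : ℚ₂^× → ℂ^× be a character with conductor a(χ). If a(χ) ∈ {2, 3}, then a(χ²) = 0; and if a(χ) ≥ 4, then a(χ²) = a(χ) − 1. -/
/-!
Characters of `ℚ₂^×` and their conductors.

A character of `ℚ₂^×` is a group homomorphism `χ : ℚ₂ˣ →* ℂˣ` which is trivial on
`U^i` for some `i ≥ 0`, where `U^0 = ℤ₂ˣ = {u : ‖u‖ = 1}` and
`U^i = 1 + 2^i ℤ₂ = {u : ‖u‖ = 1 ∧ ‖u - 1‖ ≤ 2^{-i}}` for `i ≥ 1`.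
-/

/-- `χ` is trivial on the unit subgroup `U_p^i`. -/
def IsTrivialOn (p : ℕ) [Fact p.Prime] (χ : (ℚ_[p])ˣ →* ℂˣ) (i : ℕ) : Prop :=
  ∀ u : (ℚ_[p])ˣ, ‖(u : ℚ_[p])‖ = 1 → ‖(u : ℚ_[p]) - 1‖ ≤ (p : ℝ) ^ (-(i : ℤ)) → χ u = 1

/-- The conductor `a(χ)`: the smallest `i` such that `χ` is trivial on `U_p^i`. -/
noncomputable def charConductor (p : ℕ) [Fact p.Prime] (χ : (ℚ_[p])ˣ →* ℂˣ) : ℕ :=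
  sInf {i | IsTrivialOn p χ i}

/-!
Squaring maps `U^0` into `U^3`, because the square of a unit of `ℤ/8` is `1`. For `‖x - 1‖ < 1/2`
we have `‖x + 1‖ = 1/2`, so `‖x² - 1‖ = ‖x - 1‖ / 2`; together with Hensel's lemma this shows that
squaring maps `U^j` onto `U^(j+1)` for `j ≥ 2`. Hence `χ²` is trivial on `U^0` once `χ` is trivial
on `U^3`, and for `j ≥ 2` the character `χ²` is trivial on `U^j` if and only if `χ` is trivial on
`U^(j+1)`.
-/

def unitFiltration (p : ℕ) [Fact p.Prime] (i : ℕ) : Set ℚ_[p] :=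
  {x | ‖x‖ = 1 ∧ ‖x - 1‖ ≤ (p : ℝ) ^ (-(i : ℤ))}

section Conductor

variable {p : ℕ} [Fact p.Prime] {χ : (ℚ_[p])ˣ →* ℂˣ} {i j k : ℕ}

theorem isTrivialOn_iff :
    IsTrivialOn p χ i ↔ ∀ u : (ℚ_[p])ˣ, (u : ℚ_[p]) ∈ unitFiltration p i → χ u = 1 :=
  ⟨fun h u hu => h u hu.1 hu.2, fun h u h₁ h₂ => h u ⟨h₁, h₂⟩⟩

theorem unitFiltration_antitone : Antitone (unitFiltration p) :=
  fun _ _ hij _ ⟨h₁, h₂⟩ =>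
    ⟨h₁, h₂.trans <| zpow_le_zpow_right₀ (mod_cast (Fact.out : p.Prime).one_le) (by omega)⟩

theorem norm_sub_one_lt_of_mem_unitFiltration (hki : k < i) {x : ℚ_[p]}
    (hx : x ∈ unitFiltration p i) : ‖x - 1‖ < (p : ℝ)⁻¹ ^ k := by
  have hp : (1 : ℝ) < p := mod_cast (Fact.out : p.Prime).one_lt
  refine hx.2.trans_lt ?_
  rw [zpow_neg, zpow_natCast, ← inv_pow]
  exact pow_lt_pow_right_of_lt_one₀ (by positivity) (inv_lt_one_of_one_lt₀ hp) hki

theorem IsTrivialOn.mono (h : IsTrivialOn p χ i) (hij : i ≤ j) : IsTrivialOn p χ j :=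
  isTrivialOn_iff.2 fun u hu => isTrivialOn_iff.1 h u (unitFiltration_antitone hij hu)

theorem charConductor_le (h : IsTrivialOn p χ i) : charConductor p χ ≤ i :=
  Nat.sInf_le h

theorem IsTrivialOn.of_charConductor_le (hχ : ∃ i, IsTrivialOn p χ i)
    (h : charConductor p χ ≤ i) : IsTrivialOn p χ i :=
  IsTrivialOn.mono (Nat.sInf_mem hχ) h

theorem IsTrivialOn.sq (hsq : ∀ x ∈ unitFiltration p j, x ^ 2 ∈ unitFiltration p k)
    (h : IsTrivialOn p χ k) : IsTrivialOn p (χ ^ 2) j :=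
  isTrivialOn_iff.2 fun u hu => by
    rw [MonoidHom.pow_apply, ← map_pow]
    exact isTrivialOn_iff.1 h (u ^ 2) (by simpa using hsq _ hu)

theorem IsTrivialOn.of_sq (hsqrt : ∀ w ∈ unitFiltration p k, ∃ z ∈ unitFiltration p j, z ^ 2 = w)
    (h : IsTrivialOn p (χ ^ 2) j) : IsTrivialOn p χ k := by
  refine isTrivialOn_iff.2 fun u hu => ?_
  obtain ⟨z, hz, hzu⟩ := hsqrt u hu
  have hz₀ : z ≠ 0 := norm_ne_zero_iff.1 (by rw [hz.1]; exact one_ne_zero)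
  have hsq : Units.mk0 z hz₀ ^ 2 = u := Units.ext (by simp [hzu])
  simpa [← hsq] using isTrivialOn_iff.1 h (Units.mk0 z hz₀) hz

end Conductor

section Dyadic

theorem Padic.norm_two : ‖(2 : ℚ_[2])‖ = 2⁻¹ := by
  simpa using Padic.norm_p (p := 2)

theorem Padic.norm_eq_one_of_norm_sub_one_lt_one {p : ℕ} [Fact p.Prime] {x : ℚ_[p]}
    (hx : ‖x - 1‖ < 1) : ‖x‖ = 1 := by
  rw [← sub_add_cancel x 1, Padic.add_eq_max_of_ne (by rw [norm_one]; exact hx.ne), norm_one,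
    max_eq_right hx.le]

theorem Padic.norm_sq_sub_one_of_norm_sub_one_lt {x : ℚ_[2]} (hx : ‖x - 1‖ < 2⁻¹) :
    ‖x ^ 2 - 1‖ = 2⁻¹ * ‖x - 1‖ := by
  have hplus : ‖x + 1‖ = 2⁻¹ := by
    rw [show x + 1 = (x - 1) + 2 by ring,
      Padic.add_eq_max_of_ne (by rw [Padic.norm_two]; exact hx.ne), Padic.norm_two,
      max_eq_right hx.le]
  rw [show x ^ 2 - 1 = (x + 1) * (x - 1) by ring, norm_mul, hplus]

theorem PadicInt.norm_sq_sub_one_le_of_isUnit {z : ℤ_[2]} (hz : IsUnit z) :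
    ‖z ^ 2 - 1‖ ≤ (2 : ℝ) ^ (-3 : ℤ) := by
  have hsq : ∀ u : (ZMod (2 ^ 3))ˣ, u ^ 2 = 1 := by decide
  refine mod_cast (PadicInt.norm_le_pow_iff_mem_span_pow _ 3).2 ?_
  rw [← PadicInt.ker_toZModPow, RingHom.mem_ker, map_sub, map_pow, map_one,
    ← (hz.map (toZModPow 3)).unit_spec, ← Units.val_pow_eq_pow_val, hsq, Units.val_one, sub_self]

theorem PadicInt.exists_sq_eq_of_norm_sub_one_lt {w : ℤ_[2]} (hw : ‖w - 1‖ < 2⁻¹ ^ 2) :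
    ∃ z : ℤ_[2], ‖z - 1‖ < 2⁻¹ ∧ z ^ 2 = w := by
  have hnorm_two : ‖(2 : ℤ_[2])‖ = 2⁻¹ := by simpa using PadicInt.norm_p (p := 2)
  have hnorm : ‖(Polynomial.X ^ 2 - Polynomial.C w).aeval (1 : ℤ_[2])‖ <
      ‖(Polynomial.X ^ 2 - Polynomial.C w).derivative.aeval (1 : ℤ_[2])‖ ^ 2 := by
    simpa [norm_sub_rev, one_add_one_eq_two, hnorm_two] using hw
  obtain ⟨z, hz, hz1, -⟩ := hensels_lemma hnorm
  refine ⟨z, by simpa [one_add_one_eq_two, hnorm_two] using hz1, ?_⟩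
  simpa [sub_eq_zero] using hz

theorem sq_mem_unitFiltration_three {x : ℚ_[2]} (hx : ‖x‖ = 1) : x ^ 2 ∈ unitFiltration 2 3 := by
  set z : ℤ_[2] := ⟨x, hx.le⟩
  have hz := PadicInt.norm_sq_sub_one_le_of_isUnit (PadicInt.isUnit_iff.2 (show ‖z‖ = 1 from hx))
  have hcoe : ((z ^ 2 - 1 : ℤ_[2]) : ℚ_[2]) = x ^ 2 - 1 := by push_cast; rfl
  rw [PadicInt.norm_def, hcoe] at hz
  exact ⟨by simp [hx], by simpa using hz⟩

theorem sq_mem_unitFiltration_succ_iff {x : ℚ_[2]} (hx : ‖x - 1‖ < 2⁻¹) {j : ℕ} :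
    x ^ 2 ∈ unitFiltration 2 (j + 1) ↔ x ∈ unitFiltration 2 j := by
  have hx₁ : ‖x‖ = 1 := Padic.norm_eq_one_of_norm_sub_one_lt_one (hx.trans (by norm_num))
  have hbound : (2 : ℝ) ^ (-((j + 1 : ℕ) : ℤ)) = 2⁻¹ * 2 ^ (-(j : ℤ)) := by
    rw [Nat.cast_succ, neg_add, zpow_add₀ two_ne_zero, zpow_neg_one, mul_comm]
  simp only [unitFiltration, Set.mem_ofPred_eq, norm_pow, hx₁, one_pow, true_and,
    Padic.norm_sq_sub_one_of_norm_sub_one_lt hx, Nat.cast_ofNat, hbound]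
  exact mul_le_mul_iff_right₀ (by norm_num)

theorem sq_mem_unitFiltration_succ {j : ℕ} (hj : 2 ≤ j) {x : ℚ_[2]}
    (hx : x ∈ unitFiltration 2 j) : x ^ 2 ∈ unitFiltration 2 (j + 1) :=
  (sq_mem_unitFiltration_succ_iff
    (by simpa using norm_sub_one_lt_of_mem_unitFiltration (k := 1) (by omega) hx)).2 hx

theorem exists_sq_eq_of_mem_unitFiltration_succ {j : ℕ} (hj : 2 ≤ j) {w : ℚ_[2]}
    (hw : w ∈ unitFiltration 2 (j + 1)) : ∃ z ∈ unitFiltration 2 j, z ^ 2 = w := by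
  set W : ℤ_[2] := ⟨w, hw.1.le⟩
  have hW : ‖W - 1‖ < 2⁻¹ ^ 2 := by
    rw [PadicInt.norm_def, PadicInt.coe_sub, PadicInt.coe_one]
    simpa using norm_sub_one_lt_of_mem_unitFiltration (k := 2) (by omega) hw
  obtain ⟨z, hz1, hzW⟩ := PadicInt.exists_sq_eq_of_norm_sub_one_lt hW
  have hz1' : ‖(z : ℚ_[2]) - 1‖ < 2⁻¹ := by
    rwa [PadicInt.norm_def, PadicInt.coe_sub, PadicInt.coe_one] at hz1
  have hzw : (z : ℚ_[2]) ^ 2 = w := by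
    rw [← PadicInt.coe_pow, hzW]
  exact ⟨z, (sq_mem_unitFiltration_succ_iff hz1').1 (hzw ▸ hw), hzw⟩

end Dyadic

/-- Let `χ` be a character of `ℚ₂^×` with conductor `a(χ)`.
If `a(χ) ∈ {2, 3}` then `a(χ²) = 0`, and if `a(χ) ≥ 4` then `a(χ²) = a(χ) - 1`. -/
theorem charConductor_sq_two (χ : (ℚ_[2])ˣ →* ℂˣ) (hchar : ∃ i, IsTrivialOn 2 χ i) :
    ((charConductor 2 χ = 2 ∨ charConductor 2 χ = 3) → charConductor 2 (χ ^ 2) = 0) ∧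
    (4 ≤ charConductor 2 χ → charConductor 2 (χ ^ 2) = charConductor 2 χ - 1) := by
  constructor
  · intro ha
    have h3 : IsTrivialOn 2 χ 3 := .of_charConductor_le hchar (by omega)
    exact Nat.le_zero.1 <| charConductor_le <| h3.sq fun x hx => sq_mem_unitFiltration_three hx.1
  · intro ha
    obtain ⟨j, hj⟩ : ∃ j, charConductor 2 χ = j + 2 := ⟨_, (Nat.sub_add_cancel (by omega)).symm⟩
    rw [hj] at ha ⊢
    have hsq : IsTrivialOn 2 (χ ^ 2) (j + 1) :=
      (IsTrivialOn.of_charConductor_le hchar hj.le).sq fun x hx =>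
        sq_mem_unitFiltration_succ (by omega) hx
    refine le_antisymm (charConductor_le hsq) (not_lt.1 fun hlt => ?_)
    have hχ : IsTrivialOn 2 χ (j + 1) :=
      (IsTrivialOn.of_charConductor_le ⟨_, hsq⟩ (Nat.le_of_lt_succ hlt)).of_sq fun w hw =>
        exists_sq_eq_of_mem_unitFiltration_succ (by omega) hw
    have := charConductor_le hχ
    omega
end

section
/- Let G be a group, H a subgroup of G of index 2, σ an element of G not in H, and κ : H → ℂ^× a group homomorphism with κ^σ ≠ κ, where κ^σ(x) = κ(σxσ⁻¹) for x ∈ H. Then there is a unique group homomorphism θ : G → ℂ^× satisfying θ(x) = κ(x)κ^σ(x) for all x ∈ H and θ(σ) = κ(σ²), and the symmetric square of the induced representation satisfies Sym²(Ind_H^G(κ)) ≅ Ind_H^G(κ²) ⊕ θ as complex representations of G. -/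
/-!
Induced representations, symmetric squares, and the decomposition
`Sym²(Ind_H^G κ) ≅ Ind_H^G (κ²) ⊕ θ` for an index-two subgroup `H ≤ G`.

`Ind_H^G κ` is realized on the space of functions `f : G → ℂ` with `f(hg) = κ(h)f(g)`
for `h ∈ H`, with `G` acting by right translation; `Sym²(V)` is the quotient of
`V ⊗ V` by the span of the tensors `x ⊗ y − y ⊗ x`.  Since `H` has index two it is
normal, so the conjugate character `κ^σ(x) = κ(σxσ⁻¹)` is encoded below by pairs
`(h, h') ∈ H × H` with `σ h σ⁻¹ = h'`.
-/

open scoped TensorProduct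

variable {G : Type*} [Group G]

/-- The space of the induced representation `Ind_H^G κ`: functions `f : G → ℂ` with
`f (h g) = κ(h) f(g)` for `h ∈ H`. -/
noncomputable def indCarrier (H : Subgroup G) (κ : H →* ℂˣ) : Submodule ℂ (G → ℂ) where
  carrier := {f | ∀ (h : H) (g : G), f ((h : G) * g) = (κ h : ℂ) * f g}
  add_mem' := fun {a b} ha hb h g => by
    simp only [Pi.add_apply, ha h g, hb h g]; ring
  zero_mem' := fun h g => by simp
  smul_mem' := fun c a ha h g => by
    simp only [Pi.smul_apply, smul_eq_mul, ha h g]; ring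

/-- The induced representation `Ind_H^G κ`, acting by right translation. -/
noncomputable def indRep (H : Subgroup G) (κ : H →* ℂˣ) : Representation ℂ G (indCarrier H κ) where
  toFun g :=
    { toFun := fun f => ⟨fun x => (f : G → ℂ) (x * g), fun h x => by
        simpa [mul_assoc] using f.2 h (x * g)⟩
      map_add' := fun f₁ f₂ => rfl
      map_smul' := fun c f => rfl }
  map_one' := by
    ext f x
    simp
  map_mul' g₁ g₂ := by
    ext f x
    simp [mul_assoc]

/-- The subspace of `V ⊗ V` spanned by the antisymmetric tensors `x ⊗ y − y ⊗ x`. -/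
noncomputable def symRel (V : Type*) [AddCommGroup V] [Module ℂ V] :
    Submodule ℂ (V ⊗[ℂ] V) :=
  Submodule.span ℂ {z | ∃ x y : V, z = x ⊗ₜ[ℂ] y - y ⊗ₜ[ℂ] x}

/-- The symmetric square `Sym²(V) = (V ⊗ V) / ⟨x ⊗ y − y ⊗ x⟩`. -/
abbrev Sym2Space (V : Type*) [AddCommGroup V] [Module ℂ V] :=
  (V ⊗[ℂ] V) ⧸ symRel V

theorem symRel_le {V : Type*} [AddCommGroup V] [Module ℂ V] (ρ : Representation ℂ G V)
    (g : G) : symRel V ≤ (symRel V).comap (TensorProduct.map (ρ g) (ρ g)) := by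
  rw [symRel, Submodule.span_le]
  rintro z ⟨x, y, rfl⟩
  simp only [SetLike.mem_coe, Submodule.mem_comap, map_sub, TensorProduct.map_tmul]
  exact Submodule.subset_span ⟨ρ g x, ρ g y, rfl⟩

/-- The symmetric square of a representation. -/
noncomputable def sym2Rep {V : Type*} [AddCommGroup V] [Module ℂ V]
    (ρ : Representation ℂ G V) : Representation ℂ G (Sym2Space V) where
  toFun g := Submodule.mapQ (symRel V) (symRel V)
    (TensorProduct.map (ρ g) (ρ g)) (symRel_le ρ g)
  map_one' := by
    apply Submodule.linearMap_qext
    ext x y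
    simp
  map_mul' g₁ g₂ := by
    apply Submodule.linearMap_qext
    ext x y
    simp [TensorProduct.map_tmul]

/-- The one-dimensional representation on `ℂ` given by a character `θ : G →* ℂˣ`. -/
noncomputable def charRep (θ : G →* ℂˣ) : Representation ℂ G ℂ where
  toFun g := (θ g : ℂ) • LinearMap.id
  map_one' := by
    refine LinearMap.ext fun x => ?_
    simp
  map_mul' g₁ g₂ := by
    refine LinearMap.ext fun x => ?_
    simp [Module.End.mul_apply, mul_comm, mul_assoc, mul_left_comm]

/-- The direct sum of two representations. -/
noncomputable def prodRep {V₁ V₂ : Type*} [AddCommGroup V₁] [Module ℂ V₁]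
    [AddCommGroup V₂] [Module ℂ V₂] (ρ₁ : Representation ℂ G V₁)
    (ρ₂ : Representation ℂ G V₂) : Representation ℂ G (V₁ × V₂) where
  toFun g := (ρ₁ g).prodMap (ρ₂ g)
  map_one' := by simp [LinearMap.prodMap_one]
  map_mul' g₁ g₂ := by simp [LinearMap.prodMap_mul]

/-- Two representations are isomorphic (equivalent): there is an equivariant linear
equivalence between their spaces. -/
def RepIso {V₁ V₂ : Type*} [AddCommGroup V₁] [Module ℂ V₁] [AddCommGroup V₂]
    [Module ℂ V₂] (ρ₁ : Representation ℂ G V₁) (ρ₂ : Representation ℂ G V₂) : Prop :=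
  ∃ e : V₁ ≃ₗ[ℂ] V₂, ∀ (g : G) (x : V₁), e (ρ₁ g x) = ρ₂ g (e x)

/-!
Let `e₁ ∈ Ind κ` be supported on `H` with `e₁(1) = 1`, and `e_σ = σ⁻¹ • e₁`; since `G = H ⊔ Hσ`,
every `f` equals `f(1) e₁ + f(σ) e_σ`. The map `f ⊗ f' ↦ (f f', B(f, f'))`, with
`B(f, f') = f(1) f'(σ) + f(σ) f'(1)`, is symmetric. Expanding in `e₁, e_σ` gives
`B(g f, g f') = θ(g) B(f, f')` with `θ(g) = B(g e₁, g e_σ)`, because `B(g e, g e) = 0` for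
`e = e₁, e_σ` (exactly one of `g, σg` lies in `H`). As a scaling factor `θ` is a character, and
evaluating at `h ∈ H` and at `σ` gives `κ κ^σ` and `κ(σ²)`; it is unique because `H` and `σ`
generate `G`. The map sends `e₁e₁, e_σe_σ, e₁e_σ` to a basis of `Ind κ² ⊕ ℂ`, and `f ⊗ f'`
differs from the matching combination by `f(σ) f'(1) (e₁ ⊗ e_σ − e_σ ⊗ e₁)`, so it induces
`Sym²(Ind κ) ≅ Ind κ² ⊕ θ`.
-/

lemma Subgroup.mul_inv_mem_of_index_two {H : Subgroup G} (hH : H.index = 2) {g σ : G}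
    (hg : g ∉ H) (hσ : σ ∉ H) : g * σ⁻¹ ∈ H := by
  rw [Subgroup.mul_mem_iff_of_index_two hH, H.inv_mem_iff]
  tauto

lemma MonoidHom.ext_of_index_two {M : Type*} [Monoid M] {H : Subgroup G} (hH : H.index = 2)
    {σ : G} (hσ : σ ∉ H) {φ ψ : G →* M} (hφψ : ∀ h : H, φ h = ψ h) (hσφψ : φ σ = ψ σ) :
    φ = ψ := by
  ext g
  by_cases hg : g ∈ H
  · exact hφψ ⟨g, hg⟩
  · rw [← inv_mul_cancel_right g σ, map_mul φ, map_mul ψ]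
    exact congrArg₂ (· * ·) (hφψ ⟨_, Subgroup.mul_inv_mem_of_index_two hH hg hσ⟩) hσφψ

section Representation

variable {V W : Type*} [AddCommGroup V] [Module ℂ V] [AddCommGroup W] [Module ℂ W]

@[simp]
lemma prodRep_apply (ρ : Representation ℂ G V) (τ : Representation ℂ G W) (g : G) (p : V × W) :
    prodRep ρ τ g p = (ρ g p.1, τ g p.2) := rfl

@[simp]
lemma charRep_apply (θ : G →* ℂˣ) (g : G) (c : ℂ) : charRep θ g c = θ g * c := rfl

lemma ker_eq_symRel_of_retraction (Φ : V ⊗[ℂ] V →ₗ[ℂ] W) (Ψ : W →ₗ[ℂ] V ⊗[ℂ] V)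
    (hΦ : symRel V ≤ LinearMap.ker Φ) (hΨ : ∀ z, Ψ (Φ z) - z ∈ symRel V) :
    LinearMap.ker Φ = symRel V := by
  refine le_antisymm (fun z hz => ?_) hΦ
  simpa [LinearMap.mem_ker.mp hz] using hΨ z

lemma repIso_sym2Rep_of_ker_eq {ρ : Representation ℂ G V} {τ : Representation ℂ G W}
    (Φ : V ⊗[ℂ] V →ₗ[ℂ] W) (hker : LinearMap.ker Φ = symRel V) (hΦ : Function.Surjective Φ)
    (hequiv : ∀ g x y, Φ (ρ g x ⊗ₜ ρ g y) = τ g (Φ (x ⊗ₜ y))) :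
    RepIso (sym2Rep ρ) τ := by
  have hcomm (g : G) : Φ ∘ₗ TensorProduct.map (ρ g) (ρ g) = τ g ∘ₗ Φ :=
    TensorProduct.ext' (hequiv g)
  refine ⟨(Submodule.quotEquivOfEq _ _ hker.symm).trans (Φ.quotKerEquivOfSurjective hΦ),
    fun g x => ?_⟩
  induction x using Submodule.Quotient.induction_on with
  | H z => exact LinearMap.congr_fun (hcomm g) z

end Representation

section Induced

variable (H : Subgroup G) (κ : H →* ℂˣ)

open scoped Classical in
noncomputable def indSingle : indCarrier H κ :=
  ⟨fun g => if hg : g ∈ H then (κ ⟨g, hg⟩ : ℂ) else 0, fun h g => by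
    by_cases hg : g ∈ H
    · have hhg : (h : G) * g ∈ H := H.mul_mem h.2 hg
      simp only [hg, hhg, dite_true]
      rw [← Units.val_mul, ← map_mul]
      rfl
    · have hhg : (h : G) * g ∉ H := (H.mul_mem_cancel_left h.2).not.mpr hg
      simp [hg, hhg]⟩

variable {H κ}

@[simp]
lemma indRep_apply_apply (g x : G) (f : indCarrier H κ) :
    ((indRep H κ g f : indCarrier H κ) : G → ℂ) x = (f : G → ℂ) (x * g) := rfl

lemma indSingle_apply_of_mem {g : G} (hg : g ∈ H) :
    (indSingle H κ : G → ℂ) g = κ ⟨g, hg⟩ := dif_pos hg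

lemma indSingle_apply_of_notMem {g : G} (hg : g ∉ H) :
    (indSingle H κ : G → ℂ) g = 0 := dif_neg hg

@[simp]
lemma indSingle_apply_coe (h : H) : (indSingle H κ : G → ℂ) h = κ h :=
  indSingle_apply_of_mem h.2

@[simp]
lemma indSingle_apply_one : (indSingle H κ : G → ℂ) 1 = 1 := by
  rw [indSingle_apply_of_mem H.one_mem]
  exact congrArg Units.val (map_one κ)

end Induced

section IndexTwo

variable {H : Subgroup G} {κ : H →* ℂˣ} {σ : G}

lemma indCarrier_ext_of_index_two (hH : H.index = 2) (hσ : σ ∉ H) {f f' : indCarrier H κ}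
    (h1 : (f : G → ℂ) 1 = (f' : G → ℂ) 1) (hσf : (f : G → ℂ) σ = (f' : G → ℂ) σ) :
    f = f' := by
  ext g
  by_cases hg : g ∈ H
  · have e := f.2 ⟨g, hg⟩ 1
    have e' := f'.2 ⟨g, hg⟩ 1
    simp only [mul_one] at e e'
    rw [e, e', h1]
  · have hgσ := Subgroup.mul_inv_mem_of_index_two hH hg hσ
    have e := f.2 ⟨_, hgσ⟩ σ
    have e' := f'.2 ⟨_, hgσ⟩ σ
    simp only [inv_mul_cancel_right] at e e'
    rw [e, e', hσf]

lemma indSingle_apply_mul_apply_mul_left (hH : H.index = 2) (hσ : σ ∉ H) (g : G) :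
    (indSingle H κ : G → ℂ) g * (indSingle H κ : G → ℂ) (σ * g) = 0 := by
  by_cases hg : g ∈ H
  · rw [indSingle_apply_of_notMem (g := σ * g), mul_zero]
    rwa [Subgroup.mul_mem_iff_of_index_two hH, iff_true_right hg]
  · rw [indSingle_apply_of_notMem hg, zero_mul]

lemma eq_smul_indSingle_add_smul (hH : H.index = 2) (hσ : σ ∉ H) (f : indCarrier H κ) :
    f = (f : G → ℂ) 1 • indSingle H κ + (f : G → ℂ) σ • indRep H κ σ⁻¹ (indSingle H κ) := by
  apply indCarrier_ext_of_index_two hH hσ <;>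
    simp [indSingle_apply_of_notMem hσ, indSingle_apply_of_notMem (H.inv_mem_iff.not.mpr hσ)]

variable (H κ σ) in
noncomputable def crossPairing : indCarrier H κ →ₗ[ℂ] indCarrier H κ →ₗ[ℂ] ℂ :=
  let ev (x : G) : indCarrier H κ →ₗ[ℂ] ℂ := LinearMap.proj x ∘ₗ (indCarrier H κ).subtype
  (LinearMap.mul ℂ ℂ).compl₁₂ (ev 1) (ev σ) + (LinearMap.mul ℂ ℂ).compl₁₂ (ev σ) (ev 1)

@[simp]
lemma crossPairing_apply (f f' : indCarrier H κ) :
    crossPairing H κ σ f f' =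
      (f : G → ℂ) 1 * (f' : G → ℂ) σ + (f : G → ℂ) σ * (f' : G → ℂ) 1 := rfl

lemma crossPairing_comm (f f' : indCarrier H κ) :
    crossPairing H κ σ f f' = crossPairing H κ σ f' f := by
  simp only [crossPairing_apply]
  ring

lemma crossPairing_translate_indSingle_self (hH : H.index = 2) (hσ : σ ∉ H) (g : G) :
    crossPairing H κ σ (indRep H κ g (indSingle H κ)) (indRep H κ g (indSingle H κ)) = 0 := by
  simp only [crossPairing_apply, indRep_apply_apply, one_mul]
  rw [mul_comm ((indSingle H κ : G → ℂ) (σ * g)), indSingle_apply_mul_apply_mul_left hH hσ,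
    add_zero]

lemma crossPairing_translate (hH : H.index = 2) (hσ : σ ∉ H) (g : G) (f f' : indCarrier H κ) :
    crossPairing H κ σ (indRep H κ g f) (indRep H κ g f') =
      crossPairing H κ σ (indRep H κ g (indSingle H κ))
        (indRep H κ g (indRep H κ σ⁻¹ (indSingle H κ))) * crossPairing H κ σ f f' := by
  have hσσ : crossPairing H κ σ (indRep H κ g (indRep H κ σ⁻¹ (indSingle H κ)))
      (indRep H κ g (indRep H κ σ⁻¹ (indSingle H κ))) = 0 := by
    rw [← Module.End.mul_apply, ← map_mul, crossPairing_translate_indSingle_self hH hσ]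
  conv_lhs => rw [eq_smul_indSingle_add_smul hH hσ f, eq_smul_indSingle_add_smul hH hσ f']
  simp only [map_add, map_smul, LinearMap.add_apply, LinearMap.smul_apply, smul_eq_mul,
    crossPairing_translate_indSingle_self hH hσ, hσσ]
  rw [crossPairing_comm (indRep H κ g (indRep H κ σ⁻¹ (indSingle H κ)))]
  simp only [crossPairing_apply]
  ring

variable (κ) in
noncomputable def sym2Char (hH : H.index = 2) (hσ : σ ∉ H) : G →* ℂˣ :=
  MonoidHom.toHomUnits
    { toFun g := crossPairing H κ σ (indRep H κ g (indSingle H κ))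
        (indRep H κ g (indRep H κ σ⁻¹ (indSingle H κ)))
      map_one' := by simp [indSingle_apply_of_notMem hσ]
      map_mul' g g' := by
        simp only [map_mul, Module.End.mul_apply]
        exact crossPairing_translate hH hσ g _ _ }

variable (H κ σ) in
def IsSym2Char (θ : G →* ℂˣ) : Prop :=
  (∀ h h' : H, σ * (h : G) * σ⁻¹ = (h' : G) → θ (h : G) = κ h * κ h') ∧
    (∀ s : H, (s : G) = σ * σ → θ σ = κ s)

lemma isSym2Char_sym2Char (hH : H.index = 2) (hσ : σ ∉ H) :
    IsSym2Char H κ σ (sym2Char κ hH hσ) := by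
  constructor
  · intro h h' hh'
    have hσh : σ * (h : G) ∉ H := by
      rw [Subgroup.mul_mem_iff_of_index_two hH]
      simpa using hσ
    ext
    simp [sym2Char, hh', indSingle_apply_of_notMem hσh]
  · intro s hs
    ext
    simp [sym2Char, ← hs, indSingle_apply_of_notMem hσ]

lemma IsSym2Char.unique (hH : H.index = 2) (hσ : σ ∉ H) {θ₁ θ₂ : G →* ℂˣ}
    (h₁ : IsSym2Char H κ σ θ₁) (h₂ : IsSym2Char H κ σ θ₂) : θ₁ = θ₂ := by
  have hconj (h : H) : σ * (h : G) * σ⁻¹ ∈ H :=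
    (Subgroup.normal_of_index_eq_two hH).conj_mem _ h.2 σ
  have hsq : σ * σ ∈ H := Subgroup.mul_self_mem_of_index_two hH σ
  refine MonoidHom.ext_of_index_two hH hσ (fun h => ?_) ?_
  · rw [h₁.1 h ⟨_, hconj h⟩ rfl, h₂.1 h ⟨_, hconj h⟩ rfl]
  · rw [h₁.2 ⟨_, hsq⟩ rfl, h₂.2 ⟨_, hsq⟩ rfl]

variable (H κ) in
noncomputable def indMul : indCarrier H κ →ₗ[ℂ] indCarrier H κ →ₗ[ℂ] indCarrier H (κ ^ 2) :=
  LinearMap.mk₂ ℂ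
    (fun f f' => ⟨(f : G → ℂ) * f', fun h g => by
      simp only [Pi.mul_apply, f.2 h g, f'.2 h g, MonoidHom.pow_apply, Units.val_pow_eq_pow_val]
      ring⟩)
    (fun _ _ _ => Subtype.ext (add_mul _ _ _)) (fun _ _ _ => Subtype.ext (smul_mul_assoc _ _ _))
    (fun _ _ _ => Subtype.ext (mul_add _ _ _)) (fun _ _ _ => Subtype.ext (mul_smul_comm _ _ _))

@[simp]
lemma indMul_apply_apply (f f' : indCarrier H κ) (x : G) :
    ((indMul H κ f f' : indCarrier H (κ ^ 2)) : G → ℂ) x = (f : G → ℂ) x * (f' : G → ℂ) x := rfl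

variable (H κ σ) in
noncomputable def sym2Map : indCarrier H κ ⊗[ℂ] indCarrier H κ →ₗ[ℂ] indCarrier H (κ ^ 2) × ℂ :=
  (TensorProduct.lift (indMul H κ)).prod (TensorProduct.lift (crossPairing H κ σ))

@[simp]
lemma sym2Map_tmul (f f' : indCarrier H κ) :
    sym2Map H κ σ (f ⊗ₜ f') = (indMul H κ f f', crossPairing H κ σ f f') := rfl

lemma symRel_le_ker_sym2Map : symRel (indCarrier H κ) ≤ LinearMap.ker (sym2Map H κ σ) := by
  rw [symRel, Submodule.span_le]
  rintro _ ⟨f, f', rfl⟩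
  have hmul : indMul H κ f f' = indMul H κ f' f := Subtype.ext (mul_comm _ _)
  simp [hmul, crossPairing_comm f f']

variable (H κ σ) in
noncomputable def sym2Section :
    indCarrier H (κ ^ 2) × ℂ →ₗ[ℂ] indCarrier H κ ⊗[ℂ] indCarrier H κ where
  toFun p :=
    (p.1 : G → ℂ) 1 • (indSingle H κ ⊗ₜ indSingle H κ) +
      (p.1 : G → ℂ) σ • (indRep H κ σ⁻¹ (indSingle H κ) ⊗ₜ indRep H κ σ⁻¹ (indSingle H κ)) +
      p.2 • (indSingle H κ ⊗ₜ indRep H κ σ⁻¹ (indSingle H κ))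
  map_add' p q := by
    simp only [Prod.fst_add, Prod.snd_add, Submodule.coe_add, Pi.add_apply, add_smul]
    abel
  map_smul' c p := by
    simp only [Prod.smul_fst, Prod.smul_snd, Submodule.coe_smul, Pi.smul_apply, smul_eq_mul,
      mul_smul, smul_add, RingHom.id_apply]

lemma sym2Map_sym2Section (hH : H.index = 2) (hσ : σ ∉ H) (p : indCarrier H (κ ^ 2) × ℂ) :
    sym2Map H κ σ (sym2Section H κ σ p) = p := by
  have hσ' : σ⁻¹ ∉ H := H.inv_mem_iff.not.mpr hσ
  obtain ⟨F, c⟩ := p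
  simp only [sym2Section, LinearMap.coe_mk, AddHom.coe_mk, map_add, map_smul, sym2Map_tmul]
  refine Prod.ext ?_ ?_
  · apply indCarrier_ext_of_index_two hH hσ <;>
      simp [indSingle_apply_of_notMem hσ, indSingle_apply_of_notMem hσ']
  · simp [indSingle_apply_of_notMem hσ, indSingle_apply_of_notMem hσ']

lemma sym2Section_sym2Map_sub_mem (hH : H.index = 2) (hσ : σ ∉ H)
    (z : indCarrier H κ ⊗[ℂ] indCarrier H κ) :
    sym2Section H κ σ (sym2Map H κ σ z) - z ∈ symRel (indCarrier H κ) := by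
  induction z using TensorProduct.induction_on with
  | zero => simp
  | add x y hx hy =>
    convert add_mem hx hy using 1
    simp only [map_add]
    abel
  | tmul f f' =>
    set e₁ := indSingle H κ
    set eσ := indRep H κ σ⁻¹ e₁
    have hdiff : sym2Section H κ σ (sym2Map H κ σ (f ⊗ₜ f')) - f ⊗ₜ f' =
        ((f : G → ℂ) σ * (f' : G → ℂ) 1) • (e₁ ⊗ₜ eσ - eσ ⊗ₜ e₁) := by
      change ((f : G → ℂ) 1 * (f' : G → ℂ) 1) • (e₁ ⊗ₜ e₁) +
          ((f : G → ℂ) σ * (f' : G → ℂ) σ) • (eσ ⊗ₜ eσ) +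
          ((f : G → ℂ) 1 * (f' : G → ℂ) σ + (f : G → ℂ) σ * (f' : G → ℂ) 1) • (e₁ ⊗ₜ eσ) -
          f ⊗ₜ f' = _
      conv_lhs =>
        arg 2
        rw [eq_smul_indSingle_add_smul hH hσ f, eq_smul_indSingle_add_smul hH hσ f']
      simp only [TensorProduct.add_tmul, TensorProduct.tmul_add, ← TensorProduct.smul_tmul',
        TensorProduct.tmul_smul]
      module
    rw [hdiff]
    exact Submodule.smul_mem _ _ (Submodule.subset_span ⟨_, _, rfl⟩)

lemma sym2Map_translate (hH : H.index = 2) (hσ : σ ∉ H) (g : G) (f f' : indCarrier H κ) :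
    sym2Map H κ σ (indRep H κ g f ⊗ₜ indRep H κ g f') =
      prodRep (indRep H (κ ^ 2)) (charRep (sym2Char κ hH hσ)) g (sym2Map H κ σ (f ⊗ₜ f')) := by
  simp only [sym2Map_tmul, prodRep_apply, charRep_apply]
  rw [crossPairing_translate hH hσ]
  rfl

lemma repIso_sym2Rep_indRep (hH : H.index = 2) (hσ : σ ∉ H) :
    RepIso (sym2Rep (indRep H κ)) (prodRep (indRep H (κ ^ 2)) (charRep (sym2Char κ hH hσ))) :=
  repIso_sym2Rep_of_ker_eq (sym2Map H κ σ)
    (ker_eq_symRel_of_retraction _ _ symRel_le_ker_sym2Map (sym2Section_sym2Map_sub_mem hH hσ))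
    (fun p => ⟨_, sym2Map_sym2Section hH hσ p⟩) (sym2Map_translate hH hσ)

end IndexTwo

theorem sym2_ind_decomposition_general (H : Subgroup G) (hH : H.index = 2)
    (σ : G) (hσ : σ ∉ H) (κ : H →* ℂˣ) :
    (∃! θ : G →* ℂˣ,
      (∀ h h' : H, σ * (h : G) * σ⁻¹ = (h' : G) → θ (h : G) = κ h * κ h') ∧
      (∀ s : H, (s : G) = σ * σ → θ σ = κ s)) ∧
    (∀ θ : G →* ℂˣ,
      ((∀ h h' : H, σ * (h : G) * σ⁻¹ = (h' : G) → θ (h : G) = κ h * κ h') ∧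
       (∀ s : H, (s : G) = σ * σ → θ σ = κ s)) →
      RepIso (sym2Rep (indRep H κ)) (prodRep (indRep H (κ ^ 2)) (charRep θ))) := by
  have hθ : IsSym2Char H κ σ (sym2Char κ hH hσ) := isSym2Char_sym2Char hH hσ
  refine ⟨⟨sym2Char κ hH hσ, hθ, fun θ hθ' => IsSym2Char.unique hH hσ hθ' hθ⟩, fun θ hθ' => ?_⟩
  rw [IsSym2Char.unique hH hσ hθ' hθ]
  exact repIso_sym2Rep_indRep hH hσ

/-- Let `H ≤ G` have index two, `σ ∈ G \ H`, and `κ : H →* ℂˣ` with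
`κ^σ ≠ κ` (hypothesis `hne`).  Then there is a unique character `θ : G →* ℂˣ` with
`θ(x) = κ(x)·κ^σ(x)` for `x ∈ H` and `θ(σ) = κ(σ²)`, and
`Sym²(Ind_H^G κ) ≅ Ind_H^G (κ²) ⊕ θ` as complex representations of `G`. -/
theorem sym2_ind_decomposition (H : Subgroup G) (hH : H.index = 2)
    (σ : G) (hσ : σ ∉ H) (κ : H →* ℂˣ)
    (hne : ∃ h h' : H, σ * (h : G) * σ⁻¹ = (h' : G) ∧ κ h' ≠ κ h) :
    (∃! θ : G →* ℂˣ,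
      (∀ h h' : H, σ * (h : G) * σ⁻¹ = (h' : G) → θ (h : G) = κ h * κ h') ∧
      (∀ s : H, (s : G) = σ * σ → θ σ = κ s)) ∧
    (∀ θ : G →* ℂˣ,
      ((∀ h h' : H, σ * (h : G) * σ⁻¹ = (h' : G) → θ (h : G) = κ h * κ h') ∧
       (∀ s : H, (s : G) = σ * σ → θ σ = κ s)) →
      RepIso (sym2Rep (indRep H κ)) (prodRep (indRep H (κ ^ 2)) (charRep θ))) :=
  sym2_ind_decomposition_general H hH σ hσ κ
end

section
/- Let G be a group, H a subgroup of G of index 2, and χ : H → ℂ^× a group homomorphism invariant under conjugation by G, i.e. χ(gxg⁻¹) = χ(x) for all x ∈ H and g ∈ G. Then χ extends to a group homomorphism ψ : G → ℂ^×, and the induced representation decomposes as Ind_H^G(χ) ≅ ψ ⊕ ψε, where ε : G → ℂ^× is the unique nontrivial character of G that is trivial on H. -/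
/-!
Decomposition of the representation induced from a conjugation-invariant character of an
index-two subgroup: `Ind_H^G χ ≅ ψ ⊕ ψε`.

`Ind_H^G χ` is realized on the space of functions `f : G → ℂ` with `f(hg) = χ(h)f(g)`
for `h ∈ H`, with `G` acting by right translation.  One-dimensional representations are
given by characters `G →* ℂˣ` acting on `ℂ` by scalar multiplication.
-/

variable {G : Type*} [Group G]

/-!
Pick `g₀ ∉ H` and a square root `z` of `χ (g₀ ^ 2)`. Sending `h` to `χ h` and `h g₀` to
`χ h * z` extends `χ` to a character `ψ` of `G`: moving `h' ∈ H` past `g₀` replaces it by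
`g₀ h' g₀⁻¹`, which `χ` does not notice by `G`-invariance. The same construction applied to the
trivial character with `z = -1` gives the sign character `ε`, and it is the only nontrivial
character trivial on `H`, since such a character squares to `1` on `G` and so is `-1` off `H`.

For distinct characters `θ₁ ≠ θ₂` extending `χ`, the map `(a, b) ↦ a θ₁ + b θ₂` from `ℂ²` to
`Ind χ` intertwines the actions. A function in `Ind χ` is determined by its values at `1` and
at a `g₀` with `θ₁ g₀ ≠ θ₂ g₀`, and on these two values the map is an invertible `2 × 2` system,
so it is bijective. Apply this to `ψ` and `ψ ε`.
-/

open Subgroup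

theorem Subgroup.exists_eq_or_eq_mul_of_index_eq_two {H : Subgroup G} (hH : H.index = 2)
    {g₀ : G} (hg₀ : g₀ ∉ H) (x : G) : ∃ h : H, x = h ∨ x = h * g₀ := by
  by_cases hx : x ∈ H
  · exact ⟨⟨x, hx⟩, Or.inl rfl⟩
  · have hxg₀ : x * g₀⁻¹ ∈ H := (mul_mem_iff_of_index_two hH).2 (by simp [hx, hg₀])
    exact ⟨⟨x * g₀⁻¹, hxg₀⟩, Or.inr (inv_mul_cancel_right x g₀).symm⟩

theorem MonoidHom.eq_of_index_eq_two {M : Type*} [Monoid M] {H : Subgroup G}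
    (hH : H.index = 2) {g₀ : G} (hg₀ : g₀ ∉ H) {φ₁ φ₂ : G →* M}
    (hφH : ∀ h : H, φ₁ h = φ₂ h) (hφg₀ : φ₁ g₀ = φ₂ g₀) : φ₁ = φ₂ := by
  ext x
  obtain ⟨h, rfl | rfl⟩ := exists_eq_or_eq_mul_of_index_eq_two hH hg₀ x
  · exact hφH h
  · rw [map_mul, map_mul, hφH h, hφg₀]

section Extension

variable {M : Type*} [CommGroup M] {H : Subgroup G}

open scoped Classical in
noncomputable def extendByOne (χ : H →* M) (x : G) : M :=
  if hx : x ∈ H then χ ⟨x, hx⟩ else 1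

variable (χ : H →* M)

theorem extendByOne_of_mem {x : G} (hx : x ∈ H) : extendByOne χ x = χ ⟨x, hx⟩ := dif_pos hx

@[simp]
theorem extendByOne_coe (h : H) : extendByOne χ h = χ h := extendByOne_of_mem χ h.2

theorem extendByOne_mul {x y : G} (hx : x ∈ H) (hy : y ∈ H) :
    extendByOne χ (x * y) = extendByOne χ x * extendByOne χ y := by
  rw [extendByOne_of_mem χ (mul_mem hx hy), extendByOne_of_mem χ hx, extendByOne_of_mem χ hy,
    ← map_mul]
  rfl

theorem extendByOne_conj [hN : H.Normal]
    (hinv : ∀ (g : G) (h h' : H), g * (h : G) * g⁻¹ = (h' : G) → χ h' = χ h)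
    (g : G) {x : G} (hx : x ∈ H) : extendByOne χ (g * x * g⁻¹) = extendByOne χ x := by
  have hconj : g * x * g⁻¹ ∈ H := hN.conj_mem x hx g
  rw [extendByOne_of_mem χ hconj, extendByOne_of_mem χ hx]
  exact hinv g ⟨x, hx⟩ ⟨_, hconj⟩ rfl

open scoped Classical in
noncomputable def indexTwoExtendFun (g₀ : G) (z : M) (x : G) : M :=
  if x ∈ H then extendByOne χ x else extendByOne χ (x * g₀⁻¹) * z

variable {χ} {g₀ : G} (z : M)

theorem indexTwoExtendFun_of_mem {x : G} (hx : x ∈ H) :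
    indexTwoExtendFun χ g₀ z x = extendByOne χ x := if_pos hx

theorem indexTwoExtendFun_mul_of_mem (hH : H.index = 2) (hg₀ : g₀ ∉ H)
    (hinv : ∀ (g : G) (h h' : H), g * (h : G) * g⁻¹ = (h' : G) → χ h' = χ h)
    (x : G) {h : G} (hh : h ∈ H) :
    indexTwoExtendFun χ g₀ z (x * h) = indexTwoExtendFun χ g₀ z x * extendByOne χ h := by
  by_cases hx : x ∈ H
  · simp only [indexTwoExtendFun, if_pos hx, if_pos (mul_mem hx hh), extendByOne_mul χ hx hh]
  · have hxh : x * h ∉ H := by simp [mul_mem_iff_of_index_two hH, hx, hh]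
    have hxg₀ : x * g₀⁻¹ ∈ H := (mul_mem_iff_of_index_two hH).2 (by simp [hx, hg₀])
    have hN := normal_of_index_eq_two hH
    have hconj : g₀ * h * g₀⁻¹ ∈ H := hN.conj_mem h hh g₀
    have hsplit : x * h * g₀⁻¹ = x * g₀⁻¹ * (g₀ * h * g₀⁻¹) := by group
    simp only [indexTwoExtendFun, if_neg hx, if_neg hxh]
    rw [hsplit, extendByOne_mul χ hxg₀ hconj, extendByOne_conj χ hinv g₀ hh, mul_right_comm]

theorem indexTwoExtendFun_mul_self (hH : H.index = 2) (hg₀ : g₀ ∉ H)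
    (hz : z * z = extendByOne χ (g₀ * g₀)) (x : G) :
    indexTwoExtendFun χ g₀ z (x * g₀) = indexTwoExtendFun χ g₀ z x * z := by
  by_cases hx : x ∈ H
  · have hxg₀ : x * g₀ ∉ H := by simp [mul_mem_iff_of_index_two hH, hx, hg₀]
    simp only [indexTwoExtendFun, if_pos hx, if_neg hxg₀, mul_inv_cancel_right]
  · have hxg₀ : x * g₀ ∈ H := by simp [mul_mem_iff_of_index_two hH, hx, hg₀]
    have hxg₀' : x * g₀⁻¹ ∈ H := (mul_mem_iff_of_index_two hH).2 (by simp [hx, hg₀])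
    have hsplit : x * g₀ = x * g₀⁻¹ * (g₀ * g₀) := by group
    simp only [indexTwoExtendFun, if_neg hx, if_pos hxg₀]
    rw [hsplit, extendByOne_mul χ hxg₀' (mul_self_mem_of_index_two hH g₀), ← hz, mul_assoc]

theorem indexTwoExtendFun_mul (hH : H.index = 2) (hg₀ : g₀ ∉ H)
    (hinv : ∀ (g : G) (h h' : H), g * (h : G) * g⁻¹ = (h' : G) → χ h' = χ h)
    (hz : z * z = extendByOne χ (g₀ * g₀)) (x y : G) :
    indexTwoExtendFun χ g₀ z (x * y) =
      indexTwoExtendFun χ g₀ z x * indexTwoExtendFun χ g₀ z y := by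
  obtain ⟨h, rfl | rfl⟩ := exists_eq_or_eq_mul_of_index_eq_two hH hg₀ y
  · rw [indexTwoExtendFun_mul_of_mem z hH hg₀ hinv x h.2, indexTwoExtendFun_of_mem z h.2]
  · rw [← mul_assoc, indexTwoExtendFun_mul_self z hH hg₀ hz,
      indexTwoExtendFun_mul_self z hH hg₀ hz, indexTwoExtendFun_mul_of_mem z hH hg₀ hinv x h.2,
      indexTwoExtendFun_of_mem z h.2, mul_assoc]

end Extension

theorem MonoidHom.exists_extension_of_index_eq_two {M : Type*} [CommGroup M] {H : Subgroup G}
    (hH : H.index = 2) (χ : H →* M)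
    (hinv : ∀ (g : G) (h h' : H), g * (h : G) * g⁻¹ = (h' : G) → χ h' = χ h)
    {g₀ : G} (hg₀ : g₀ ∉ H) {z : M} (hz : z * z = extendByOne χ (g₀ * g₀)) :
    ∃ ψ : G →* M, (∀ h : H, ψ h = χ h) ∧ ψ g₀ = z := by
  have hone : indexTwoExtendFun χ g₀ z 1 = 1 := by
    rw [indexTwoExtendFun_of_mem z H.one_mem, extendByOne_of_mem χ H.one_mem]
    exact map_one χ
  refine ⟨⟨⟨indexTwoExtendFun χ g₀ z, hone⟩, indexTwoExtendFun_mul z hH hg₀ hinv hz⟩,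
    fun h => ?_, ?_⟩
  · simp [indexTwoExtendFun_of_mem z h.2]
  · simpa [hone] using indexTwoExtendFun_mul_self z hH hg₀ hz 1

theorem MonoidHom.apply_eq_neg_one_of_index_eq_two {R : Type*} [Ring R] [NoZeroDivisors R]
    {H : Subgroup G} (hH : H.index = 2) {ε : G →* Rˣ} (hne : ε ≠ 1)
    (htriv : ∀ h : H, ε h = 1) {x : G} (hx : x ∉ H) : ε x = -1 := by
  have hsq : (ε x : R) * ε x = 1 := by
    rw [← Units.val_mul, ← map_mul, htriv ⟨_, mul_self_mem_of_index_two hH x⟩, Units.val_one]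
  rcases mul_self_eq_one_iff.1 hsq with h | h
  · exact absurd (eq_of_index_eq_two hH hx htriv (Units.ext h)) hne
  · exact Units.ext h

theorem existsUnique_char_ne_one_of_index_eq_two {H : Subgroup G} (hH : H.index = 2) :
    ∃! ε : G →* ℂˣ, ε ≠ 1 ∧ ∀ h : H, ε h = 1 := by
  obtain ⟨g₀, hg₀, -⟩ := index_eq_two_iff_exists_notMem_and.1 hH
  obtain ⟨ε, hεH, hεg₀⟩ := MonoidHom.exists_extension_of_index_eq_two hH (1 : H →* ℂˣ)
    (by simp) hg₀ (z := -1) (by simp [extendByOne])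
  refine ⟨ε, ⟨fun h => ?_, hεH⟩, fun ε' ⟨hne', htriv'⟩ => ?_⟩
  · have := congrArg Units.val (hεg₀.symm.trans (DFunLike.congr_fun h g₀))
    norm_num at this
  · exact MonoidHom.eq_of_index_eq_two hH hg₀ (fun h => (htriv' h).trans (hεH h).symm)
      (by rw [MonoidHom.apply_eq_neg_one_of_index_eq_two hH hne' htriv' hg₀, hεg₀])

theorem exists_units_mul_self_eq {k : Type*} [Field k] [IsAlgClosed k] (u : kˣ) :
    ∃ z : kˣ, z * z = u := by
  obtain ⟨w, hw⟩ := IsAlgClosed.exists_eq_mul_self (u : k)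
  have hw0 : w ≠ 0 := by
    rintro rfl
    simp at hw
  exact ⟨Units.mk0 w hw0, Units.ext hw.symm⟩

theorem RepIso.of_bijective {V₁ V₂ : Type*} [AddCommGroup V₁] [Module ℂ V₁] [AddCommGroup V₂]
    [Module ℂ V₂] {ρ₁ : Representation ℂ G V₁} {ρ₂ : Representation ℂ G V₂}
    (L : V₂ →ₗ[ℂ] V₁) (hL : Function.Bijective L) (hLρ : ∀ g x, L (ρ₂ g x) = ρ₁ g (L x)) :
    RepIso ρ₁ ρ₂ :=
  ⟨(LinearEquiv.ofBijective L hL).symm, fun g x => hL.1 (by simp [hLρ])⟩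

section Induced

variable {H : Subgroup G} {κ : H →* ℂˣ}

theorem indCarrier_ext_of_index_eq_two (hH : H.index = 2) {g₀ : G} (hg₀ : g₀ ∉ H)
    {f f' : indCarrier H κ} (h1 : (f : G → ℂ) 1 = (f' : G → ℂ) 1)
    (hg₀' : (f : G → ℂ) g₀ = (f' : G → ℂ) g₀) : f = f' := by
  refine Subtype.ext (funext fun x => ?_)
  obtain ⟨h, rfl | rfl⟩ := exists_eq_or_eq_mul_of_index_eq_two hH hg₀ x
  · rw [← mul_one (h : G), f.2 h 1, f'.2 h 1, h1]
  · rw [f.2 h g₀, f'.2 h g₀, hg₀']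

theorem units_val_comp_mem_indCarrier {θ : G →* ℂˣ} (hθ : ∀ h : H, θ h = κ h) :
    (fun x => (θ x : ℂ)) ∈ indCarrier H κ := fun h g => by
  simp only [map_mul, Units.val_mul, hθ]

noncomputable def charPairMap (θ₁ θ₂ : G →* ℂˣ) : ℂ × ℂ →ₗ[ℂ] G → ℂ :=
  (LinearMap.fst ℂ ℂ ℂ).smulRight (fun x => (θ₁ x : ℂ)) +
    (LinearMap.snd ℂ ℂ ℂ).smulRight (fun x => (θ₂ x : ℂ))

theorem charPairMap_apply (θ₁ θ₂ : G →* ℂˣ) (p : ℂ × ℂ) (x : G) :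
    charPairMap θ₁ θ₂ p x = p.1 * θ₁ x + p.2 * θ₂ x := by
  simp [charPairMap]

variable {θ₁ θ₂ : G →* ℂˣ}

noncomputable def charPairToInd (h₁ : ∀ h : H, θ₁ h = κ h) (h₂ : ∀ h : H, θ₂ h = κ h) :
    ℂ × ℂ →ₗ[ℂ] indCarrier H κ :=
  (charPairMap θ₁ θ₂).codRestrict (indCarrier H κ) fun p =>
    add_mem (Submodule.smul_mem _ p.1 (units_val_comp_mem_indCarrier h₁))
      (Submodule.smul_mem _ p.2 (units_val_comp_mem_indCarrier h₂))

variable (h₁ : ∀ h : H, θ₁ h = κ h) (h₂ : ∀ h : H, θ₂ h = κ h)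

theorem coe_charPairToInd (p : ℂ × ℂ) :
    (charPairToInd h₁ h₂ p : G → ℂ) = charPairMap θ₁ θ₂ p := rfl

theorem charPairToInd_prodRep (g : G) (p : ℂ × ℂ) :
    charPairToInd h₁ h₂ (prodRep (charRep θ₁) (charRep θ₂) g p) =
      indRep H κ g (charPairToInd h₁ h₂ p) := by
  refine Subtype.ext (funext fun x => ?_)
  change charPairMap θ₁ θ₂ _ x = charPairMap θ₁ θ₂ p (x * g)
  simp [charPairMap_apply, prodRep, charRep, map_mul]
  ring

theorem charPairToInd_bijective (hH : H.index = 2) {g₀ : G} (hθ : θ₁ g₀ ≠ θ₂ g₀) :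
    Function.Bijective (charPairToInd h₁ h₂) := by
  have hg₀ : g₀ ∉ H := fun hm => hθ (by rw [h₁ ⟨g₀, hm⟩, h₂ ⟨g₀, hm⟩])
  have ht : (θ₁ g₀ : ℂ) - θ₂ g₀ ≠ 0 := sub_ne_zero.2 fun h => hθ (Units.ext h)
  refine ⟨(injective_iff_map_eq_zero _).2 fun p hp => ?_, fun f => ?_⟩
  · have e1 := congrFun (congrArg Subtype.val hp) 1
    have e2 := congrFun (congrArg Subtype.val hp) g₀
    simp only [coe_charPairToInd, charPairMap_apply, map_one, Units.val_one, mul_one,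
      ZeroMemClass.coe_zero, Pi.zero_apply] at e1 e2
    have hp1 : p.1 * ((θ₁ g₀ : ℂ) - θ₂ g₀) = 0 := by linear_combination e2 - (θ₂ g₀ : ℂ) * e1
    have hp1' : p.1 = 0 := (mul_eq_zero.1 hp1).resolve_right ht
    exact Prod.ext hp1' (show p.2 = 0 by linear_combination e1 - hp1')
  · -- `a` solves `a + b = f 1`, `a θ₁ g₀ + b θ₂ g₀ = f g₀`
    set a : ℂ := ((f : G → ℂ) g₀ - θ₂ g₀ * (f : G → ℂ) 1) / ((θ₁ g₀ : ℂ) - θ₂ g₀)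
    refine ⟨(a, (f : G → ℂ) 1 - a), indCarrier_ext_of_index_eq_two hH hg₀ ?_ ?_⟩
    · simp [coe_charPairToInd, charPairMap_apply]
    · simp only [coe_charPairToInd, charPairMap_apply, a]
      field_simp
      ring

end Induced

theorem repIso_indRep_prodRep_charRep {H : Subgroup G} (hH : H.index = 2) {κ : H →* ℂˣ}
    {θ₁ θ₂ : G →* ℂˣ} (h₁ : ∀ h : H, θ₁ h = κ h) (h₂ : ∀ h : H, θ₂ h = κ h) (hne : θ₁ ≠ θ₂) :
    RepIso (indRep H κ) (prodRep (charRep θ₁) (charRep θ₂)) := by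
  obtain ⟨g₀, hθ⟩ : ∃ g₀, θ₁ g₀ ≠ θ₂ g₀ := by
    by_contra! h
    exact hne (MonoidHom.ext h)
  exact RepIso.of_bijective _ (charPairToInd_bijective h₁ h₂ hH hθ) (charPairToInd_prodRep h₁ h₂)

/-- Let `H ≤ G` have index two and let `χ : H →* ℂˣ` be invariant under
conjugation by `G`.  Then `χ` extends to a character `ψ` of `G`, and
`Ind_H^G χ ≅ ψ ⊕ ψε`, where `ε` is the unique nontrivial character of `G` trivial
on `H`. -/
theorem ind_invariant_char_decomposition (H : Subgroup G) (hH : H.index = 2)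
    (χ : H →* ℂˣ)
    (hinv : ∀ (g : G) (h h' : H), g * (h : G) * g⁻¹ = (h' : G) → χ h' = χ h) :
    ∃ ψ : G →* ℂˣ, (∀ h : H, ψ (h : G) = χ h) ∧
      (∃! ε : G →* ℂˣ, ε ≠ 1 ∧ ∀ h : H, ε (h : G) = 1) ∧
      (∀ ε : G →* ℂˣ, (ε ≠ 1 ∧ ∀ h : H, ε (h : G) = 1) →
        RepIso (indRep H χ) (prodRep (charRep ψ) (charRep (ψ * ε)))) := by
  obtain ⟨g₀, hg₀, -⟩ := index_eq_two_iff_exists_notMem_and.1 hH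
  obtain ⟨z, hz⟩ := exists_units_mul_self_eq (extendByOne χ (g₀ * g₀))
  obtain ⟨ψ, hψ, -⟩ := MonoidHom.exists_extension_of_index_eq_two hH χ hinv hg₀ hz
  refine ⟨ψ, hψ, existsUnique_char_ne_one_of_index_eq_two hH, fun ε ⟨hne, htriv⟩ => ?_⟩
  have hψε : ∀ h : H, (ψ * ε) h = χ h := fun h => by
    rw [MonoidHom.mul_apply, htriv, mul_one, hψ]
  refine repIso_indRep_prodRep_charRep hH hψ hψε fun h => hne (MonoidHom.ext fun x => ?_)
  simpa using (DFunLike.congr_fun h x).symm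
end

section
/- Let K/ℚ₂ be a ramified quadratic field extension, let δ be the 2-adic valuation of the discriminant of K/ℚ₂, and let ω : ℚ₂^× → ℂ^× be a character of order 2 with kernel N_{K/ℚ₂}(K^×) and conductor a(ω) = δ. Then for every character φ of ℚ₂^× with a(φ) ≥ δ + 1, one has a(φ ∘ N_{K/ℚ₂}) = 2a(φ) − δ; in particular a(φ ∘ N_{K/ℚ₂}) has the same parity as δ. -/
/-!
For a principal unit `u = 1 + x` of the quadratic extension `K` one has
`N(u) = 1 + Tr x + N x`. Since the different is `𝔭_K ^ δ`, the trace maps `𝔭_K ^ m` onto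
`p ^ ⌊(m + δ) / 2⌋ ℤ_p`, and since `K/ℚ_p` is totally ramified, `v_p (N x) = v_K x`.
So for `a(φ) = n ≥ δ + 1` the norm maps `U_K ^ (2n - δ)` into `U ^ n`, where `φ` is trivial,
whereas every `w ∈ U ^ (n - 1)` is, modulo `U ^ n`, the norm of some `1 + x ∈ U_K ^ (2n - δ - 1)`:
take `Tr x = w - 1`. Choosing `w` with `φ w ≠ 1` shows that `a(φ ∘ N) = 2n - δ`.
-/

/-- The normalized discrete valuation on a finite extension `K` of `ℚ_p`, together with
the ramification index `e`.  (Such data exists and is unique for every finite extension.) -/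
structure PadicValData (p : ℕ) [Fact p.Prime] (K : Type*) [Field K] [Algebra ℚ_[p] K] where
  /-- the normalized valuation (with junk value at `0`) -/
  v : K → ℤ
  /-- the ramification index of `K/ℚ_p` -/
  e : ℕ
  v_mul : ∀ x y : K, x ≠ 0 → y ≠ 0 → v (x * y) = v x + v y
  v_add : ∀ x y : K, x ≠ 0 → y ≠ 0 → x + y ≠ 0 → min (v x) (v y) ≤ v (x + y)
  v_surj : ∀ n : ℤ, ∃ x : K, x ≠ 0 ∧ v x = n
  v_compat : ∀ x : ℚ_[p], x ≠ 0 → v (algebraMap ℚ_[p] K x) = (e : ℤ) * x.valuation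

/-- `χ` (a character of `ℚ_p^×`) is trivial on the unit subgroup `U_p^i`. -/
def IsTrivialOnQ (p : ℕ) [Fact p.Prime] (χ : (ℚ_[p])ˣ →* ℂˣ) (i : ℕ) : Prop :=
  ∀ u : (ℚ_[p])ˣ, ‖(u : ℚ_[p])‖ = 1 → ‖(u : ℚ_[p]) - 1‖ ≤ (p : ℝ) ^ (-(i : ℤ)) → χ u = 1

/-- The conductor `a(χ)` of a character of `ℚ_p^×`. -/
noncomputable def condQ (p : ℕ) [Fact p.Prime] (χ : (ℚ_[p])ˣ →* ℂˣ) : ℕ :=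
  sInf {i | IsTrivialOnQ p χ i}

/-- `κ` (a character of `K^×`) is trivial on the higher unit group `U_K^i`. -/
def IsTrivialOnK {p : ℕ} [Fact p.Prime] {K : Type*} [Field K] [Algebra ℚ_[p] K]
    (D : PadicValData p K) (κ : Kˣ →* ℂˣ) (i : ℕ) : Prop :=
  ∀ u : Kˣ, D.v u = 0 → ((u : K) - 1 = 0 ∨ (i : ℤ) ≤ D.v ((u : K) - 1)) → κ u = 1

/-- The conductor `a(κ)` of a character of `K^×`. -/
noncomputable def condK {p : ℕ} [Fact p.Prime] {K : Type*} [Field K] [Algebra ℚ_[p] K]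
    (D : PadicValData p K) (κ : Kˣ →* ℂˣ) : ℕ :=
  sInf {i | IsTrivialOnK D κ i}

section Quadratic

variable {F K : Type*} [Field F] [Field K] [Algebra F K]

theorem Algebra.sq_sub_trace_mul_add_norm_of_finrank_eq_two (h : Module.finrank F K = 2)
    (z : K) : z ^ 2 - algebraMap F K (Algebra.trace F K z) * z
      + algebraMap F K (Algebra.norm F z) = 0 := by
  have : FiniteDimensional F K := .of_finrank_eq_succ h
  let b : Module.Basis (Fin 2) F K := Module.finBasisOfFinrankEq F K h
  apply Algebra.leftMulMatrix_injective b
  have hCH := (Algebra.leftMulMatrix b z).aeval_self_charpoly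
  rw [Matrix.charpoly_fin_two] at hCH
  simpa [Algebra.trace_eq_matrix_trace b, Algebra.norm_eq_matrix_det b,
    Algebra.algebraMap_eq_smul_one] using hCH

theorem Algebra.norm_eq_mul_trace_sub_of_finrank_eq_two (h : Module.finrank F K = 2) (z : K) :
    algebraMap F K (Algebra.norm F z) = z * (algebraMap F K (Algebra.trace F K z) - z) := by
  linear_combination Algebra.sq_sub_trace_mul_add_norm_of_finrank_eq_two h z

theorem Algebra.norm_one_add_of_finrank_eq_two (h : Module.finrank F K = 2) (x : K) :
    Algebra.norm F (1 + x) = 1 + Algebra.trace F K x + Algebra.norm F x := by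
  have : FiniteDimensional F K := .of_finrank_eq_succ h
  apply (algebraMap F K).injective
  have htr : Algebra.trace F K (1 + x) = 2 + Algebra.trace F K x := by
    rw [map_add, ← map_one (algebraMap F K), Algebra.trace_algebraMap, h]
    simp
  have h1 := Algebra.norm_eq_mul_trace_sub_of_finrank_eq_two h (1 + x)
  rw [htr] at h1
  simp only [map_add, map_one, map_ofNat] at h1 ⊢
  linear_combination h1 - Algebra.norm_eq_mul_trace_sub_of_finrank_eq_two h x

end Quadratic

namespace Padic

variable {p : ℕ} [Fact p.Prime]

theorem norm_le_zpow_neg_iff {c : ℚ_[p]} (hc : c ≠ 0) (k : ℤ) :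
    ‖c‖ ≤ (p : ℝ) ^ (-k) ↔ k ≤ c.valuation := by
  rw [norm_eq_zpow_neg_valuation hc,
    zpow_le_zpow_iff_right₀ (by exact_mod_cast (Fact.out : p.Prime).one_lt), neg_le_neg_iff]

end Padic

namespace PadicValData

variable {p : ℕ} [Fact p.Prime] {K : Type*} [Field K] [Algebra ℚ_[p] K] (D : PadicValData p K)

theorem v_one : D.v 1 = 0 := by
  have := D.v_mul 1 1 one_ne_zero one_ne_zero
  rw [mul_one] at this
  omega

theorem v_neg (x : K) : D.v (-x) = D.v x := by
  rcases eq_or_ne x 0 with rfl | hx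
  · rw [neg_zero]
  have hsq := D.v_mul (-1) (-1) (by norm_num) (by norm_num)
  rw [neg_mul_neg, one_mul, v_one] at hsq
  rw [← neg_one_mul, D.v_mul _ _ (by norm_num) hx]
  omega

theorem v_inv {x : K} (hx : x ≠ 0) : D.v x⁻¹ = -D.v x := by
  have := D.v_mul x x⁻¹ hx (inv_ne_zero hx)
  rw [mul_inv_cancel₀ hx, v_one] at this
  omega

theorem min_le_v_sub {x y : K} (hx : x ≠ 0) (hy : y ≠ 0) (hxy : x - y ≠ 0) :
    min (D.v x) (D.v y) ≤ D.v (x - y) := by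
  rw [← D.v_neg y, sub_eq_add_neg]
  exact D.v_add x (-y) hx (neg_ne_zero.mpr hy) (by rwa [← sub_eq_add_neg])

theorem v_add_eq_of_lt {a b : K} (ha : a ≠ 0) (hb : b ≠ 0) (h : D.v a < D.v b) :
    a + b ≠ 0 ∧ D.v (a + b) = D.v a := by
  have hab : a + b ≠ 0 := by
    intro h0
    rw [eq_neg_of_add_eq_zero_right h0, v_neg] at h
    exact h.false
  have hle := D.v_add a b ha hb hab
  have hge := D.min_le_v_sub hab hb (by rwa [add_sub_cancel_right])
  rw [add_sub_cancel_right] at hge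
  exact ⟨hab, by omega⟩

theorem v_algebraMap_mul {c : ℚ_[p]} {x : K} (hc : c ≠ 0) (hx : x ≠ 0) :
    D.v (algebraMap ℚ_[p] K c * x) = D.e * c.valuation + D.v x := by
  rw [D.v_mul _ _ ((map_ne_zero _).mpr hc) hx, D.v_compat c hc]

/-- The different of `K/ℚ_p` is `𝔭_K ^ δ`, i.e. the inverse different
`{x | Tr(x 𝒪_K) ⊆ ℤ_p}` is `𝔭_K ^ (-δ)`. -/
def HasDifferentExponent (δ : ℕ) : Prop :=
  ∀ x : K, (∀ y : K, (y = 0 ∨ 0 ≤ D.v y) → ‖Algebra.trace ℚ_[p] K (x * y)‖ ≤ 1) ↔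
    (x = 0 ∨ -(δ : ℤ) ≤ D.v x)

namespace HasDifferentExponent

variable {D} {δ : ℕ}

theorem norm_trace_le (hδ : D.HasDifferentExponent δ) {x : K} (k : ℤ)
    (hv : D.e * k ≤ D.v x + δ) :
    ‖Algebra.trace ℚ_[p] K x‖ ≤ (p : ℝ) ^ (-k) := by
  rcases eq_or_ne x 0 with rfl | hx
  · rw [map_zero, norm_zero]
    positivity
  have hp : (p : ℚ_[p]) ≠ 0 := by exact_mod_cast (Fact.out : p.Prime).ne_zero
  have hc : (p : ℚ_[p]) ^ (-k) ≠ 0 := zpow_ne_zero _ hp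
  have hint : ‖Algebra.trace ℚ_[p] K (algebraMap ℚ_[p] K ((p : ℚ_[p]) ^ (-k)) * x * 1)‖ ≤ 1 := by
    refine (hδ _).mpr (.inr ?_) 1 (.inr D.v_one.ge)
    rw [D.v_algebraMap_mul hc hx, Padic.valuation_zpow, Padic.valuation_p]
    linarith
  calc ‖Algebra.trace ℚ_[p] K x‖
      = ‖(p : ℚ_[p]) ^ k‖ *
          ‖Algebra.trace ℚ_[p] K (algebraMap ℚ_[p] K ((p : ℚ_[p]) ^ (-k)) * x * 1)‖ := by
        rw [mul_one, ← Algebra.smul_def, map_smul, smul_eq_mul, ← norm_mul, ← mul_assoc,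
          ← zpow_add₀ hp, add_neg_cancel, zpow_zero, one_mul]
    _ ≤ (p : ℝ) ^ (-k) := by
        rw [Padic.norm_p_zpow]
        exact mul_le_of_le_one_right (by positivity) hint

theorem exists_lt_norm_trace (hδ : D.HasDifferentExponent δ) (n : ℤ) :
    ∃ x : K, D.e * n - 1 - δ ≤ D.v x ∧ (p : ℝ) ^ (-n) < ‖Algebra.trace ℚ_[p] K x‖ := by
  have hp : (p : ℚ_[p]) ≠ 0 := by exact_mod_cast (Fact.out : p.Prime).ne_zero
  obtain ⟨x₀, hx₀, hvx₀⟩ := D.v_surj (D.e * n - 1 - δ)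
  set w := algebraMap ℚ_[p] K ((p : ℚ_[p]) ^ (-n)) * x₀
  have hw : w ≠ 0 := mul_ne_zero ((map_ne_zero _).mpr (zpow_ne_zero _ hp)) hx₀
  have hvw : D.v w = -1 - δ := by
    rw [D.v_algebraMap_mul (zpow_ne_zero _ hp) hx₀, Padic.valuation_zpow, Padic.valuation_p, hvx₀]
    ring
  obtain ⟨y, hy, hwy⟩ : ∃ y : K, (y = 0 ∨ 0 ≤ D.v y) ∧ 1 < ‖Algebra.trace ℚ_[p] K (w * y)‖ := by
    by_contra! h
    have := ((hδ w).mp h).resolve_left hw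
    omega
  have hy0 : y ≠ 0 := by
    rintro rfl
    rw [mul_zero, map_zero, norm_zero] at hwy
    exact hwy.not_ge zero_le_one
  refine ⟨x₀ * y, ?_, ?_⟩
  · rw [D.v_mul _ _ hx₀ hy0]
    have := hy.resolve_left hy0
    omega
  · have hpn : (0 : ℝ) < (p : ℝ) ^ n := zpow_pos (by exact_mod_cast (Fact.out : p.Prime).pos) n
    rwa [mul_assoc, ← Algebra.smul_def, map_smul, smul_eq_mul, norm_mul, Padic.norm_p_zpow,
      neg_neg, ← inv_lt_iff_one_lt_mul₀' hpn, ← zpow_neg] at hwy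

theorem exists_trace_eq (hδ : D.HasDifferentExponent δ) {c : ℚ_[p]} (hc : c ≠ 0) :
    ∃ x : K, D.e * (c.valuation + 1) - 1 - δ ≤ D.v x ∧ Algebra.trace ℚ_[p] K x = c := by
  obtain ⟨x, hvx, hlt⟩ := hδ.exists_lt_norm_trace (c.valuation + 1)
  set t := Algebra.trace ℚ_[p] K x
  have ht : t ≠ 0 := by
    intro h
    rw [h, norm_zero] at hlt
    exact hlt.not_ge (by positivity)
  have hx : x ≠ 0 := by
    rintro rfl
    exact ht (map_zero _)
  have hvt : t.valuation ≤ c.valuation := by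
    have := (Padic.norm_le_zpow_neg_iff ht _).not.mp hlt.not_ge
    omega
  have ha : c / t ≠ 0 := div_ne_zero hc ht
  refine ⟨algebraMap ℚ_[p] K (c / t) * x, ?_, ?_⟩
  · rw [D.v_algebraMap_mul ha hx, div_eq_mul_inv, Padic.valuation_mul hc (inv_ne_zero ht),
      Padic.valuation_inv]
    have : (0 : ℤ) ≤ D.e * (c.valuation + -t.valuation) := mul_nonneg (by positivity) (by omega)
    omega
  · rw [← Algebra.smul_def, map_smul, smul_eq_mul, div_mul_cancel₀ c ht]

theorem le_valuation_norm (hδ : D.HasDifferentExponent δ) (hquad : Module.finrank ℚ_[p] K = 2)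
    (hram : D.e = 2) {z : K} (hz : z ≠ 0) : D.v z ≤ (Algebra.norm ℚ_[p] z).valuation := by
  have : FiniteDimensional ℚ_[p] K := .of_finrank_eq_succ hquad
  set t := Algebra.trace ℚ_[p] K z
  have hN : Algebra.norm ℚ_[p] z ≠ 0 := Algebra.norm_ne_zero_iff.mpr hz
  have hfac := Algebra.norm_eq_mul_trace_sub_of_finrank_eq_two hquad z
  have hsub : algebraMap ℚ_[p] K t - z ≠ 0 := by
    intro h0
    rw [h0, mul_zero] at hfac
    exact (map_ne_zero _).mpr hN hfac
  -- `v_K(t) = 2 v_p(t) ≥ 2 ⌊v_K(z) / 2⌋`, which loses at most one against `v_K(z)`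
  have hvsub : D.v z - 1 ≤ D.v (algebraMap ℚ_[p] K t - z) := by
    rcases eq_or_ne t 0 with ht | ht
    · rw [ht, map_zero, zero_sub, D.v_neg]
      omega
    have hvt : D.v z / 2 ≤ t.valuation :=
      (Padic.norm_le_zpow_neg_iff ht _).mp (hδ.norm_trace_le _ (by rw [hram]; omega))
    have := D.min_le_v_sub ((map_ne_zero _).mpr ht) hz hsub
    rw [D.v_compat t ht, hram] at this
    omega
  have hv := D.v_compat _ hN
  rw [hfac, D.v_mul _ _ hz hsub, hram] at hv
  omega

theorem valuation_norm (hδ : D.HasDifferentExponent δ) (hquad : Module.finrank ℚ_[p] K = 2)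
    (hram : D.e = 2) {z : K} (hz : z ≠ 0) : (Algebra.norm ℚ_[p] z).valuation = D.v z := by
  have : FiniteDimensional ℚ_[p] K := .of_finrank_eq_succ hquad
  have hle := hδ.le_valuation_norm hquad hram hz
  have hge := hδ.le_valuation_norm hquad hram (inv_ne_zero hz)
  rw [Algebra.norm_inv, Padic.valuation_inv, D.v_inv hz] at hge
  omega

theorem norm_algebraNorm (hδ : D.HasDifferentExponent δ) (hquad : Module.finrank ℚ_[p] K = 2)
    (hram : D.e = 2) {z : K} (hz : z ≠ 0) :
    ‖Algebra.norm ℚ_[p] z‖ = (p : ℝ) ^ (-D.v z) := by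
  have : FiniteDimensional ℚ_[p] K := .of_finrank_eq_succ hquad
  rw [Padic.norm_eq_zpow_neg_valuation (Algebra.norm_ne_zero_iff.mpr hz),
    hδ.valuation_norm hquad hram hz]

end HasDifferentExponent

end PadicValData

section Characters

variable {p : ℕ} [Fact p.Prime] {K : Type*} [Field K] [Algebra ℚ_[p] K]

theorem IsTrivialOnQ.apply_eq_of_norm_sub_le {χ : (ℚ_[p])ˣ →* ℂˣ} {i : ℕ}
    (h : IsTrivialOnQ p χ i) {a b : (ℚ_[p])ˣ} (ha : ‖(a : ℚ_[p])‖ = 1)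
    (hb : ‖(b : ℚ_[p])‖ = 1) (hab : ‖(b : ℚ_[p]) - a‖ ≤ (p : ℝ) ^ (-(i : ℤ))) : χ b = χ a := by
  have hquot : χ (b * a⁻¹) = 1 := by
    refine h _ (by simp [ha, hb]) ?_
    rwa [Units.val_mul, Units.val_inv_eq_inv_val, ← mul_inv_cancel₀ a.ne_zero, ← sub_mul,
      norm_mul, norm_inv, ha, inv_one, mul_one]
  rw [← inv_mul_cancel_right b a, map_mul, hquot, one_mul]

theorem IsTrivialOnK.mono {D : PadicValData p K} {κ : Kˣ →* ℂˣ} {i j : ℕ}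
    (h : IsTrivialOnK D κ i) (hij : i ≤ j) : IsTrivialOnK D κ j :=
  fun u hu hc ↦ h u hu (hc.imp_right fun hj ↦ le_trans (by exact_mod_cast hij) hj)

theorem condK_eq_of_isTrivialOnK {D : PadicValData p K} {κ : Kˣ →* ℂˣ} {m : ℕ}
    (h : IsTrivialOnK D κ m) (h' : ¬IsTrivialOnK D κ (m - 1)) : condK D κ = m := by
  refine le_antisymm (Nat.sInf_le h) (not_lt.mp fun hlt ↦ h' ?_)
  have hmem : IsTrivialOnK D κ (condK D κ) :=
    Nat.sInf_mem (s := {i | IsTrivialOnK D κ i}) ⟨m, h⟩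
  exact hmem.mono (by omega)

end Characters

section RamifiedQuadratic

variable {p : ℕ} [Fact p.Prime] {K : Type*} [Field K] [Algebra ℚ_[p] K] {D : PadicValData p K}
  {δ : ℕ} {φ : (ℚ_[p])ˣ →* ℂˣ} {n : ℕ}

theorem isTrivialOnK_comp_norm (hquad : Module.finrank ℚ_[p] K = 2) (hram : D.e = 2)
    (hδ : D.HasDifferentExponent δ) (hφ : IsTrivialOnQ p φ n) (hn : δ ≤ n) :
    IsTrivialOnK D (φ.comp (Units.map (Algebra.norm ℚ_[p] : K →* ℚ_[p]))) (2 * n - δ) := by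
  intro u hu hcond
  rcases eq_or_ne ((u : K) - 1) 0 with hu1 | hx
  · rw [show u = 1 from Units.ext (sub_eq_zero.mp hu1), map_one]
  have hvx : 2 * (n : ℤ) - δ ≤ D.v ((u : K) - 1) := by
    simpa [Nat.cast_sub (by omega : δ ≤ 2 * n)] using hcond.resolve_left hx
  have hp : (1 : ℝ) ≤ p := by exact_mod_cast (Fact.out : p.Prime).one_lt.le
  have hNu : (Units.map (Algebra.norm ℚ_[p] : K →* ℚ_[p]) u : ℚ_[p]) - 1 =
      Algebra.trace ℚ_[p] K ((u : K) - 1) + Algebra.norm ℚ_[p] ((u : K) - 1) := by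
    rw [Units.coe_map, ← add_sub_cancel (1 : K) u,
      Algebra.norm_one_add_of_finrank_eq_two hquad, add_sub_cancel_left]
    ring
  rw [MonoidHom.comp_apply, ← map_one φ]
  refine hφ.apply_eq_of_norm_sub_le (by simp) ?_ ?_
  · rw [Units.coe_map, hδ.norm_algebraNorm hquad hram u.ne_zero, hu, neg_zero, zpow_zero]
  · rw [Units.val_one, hNu]
    refine (Padic.nonarchimedean _ _).trans (max_le ?_ ?_)
    · exact hδ.norm_trace_le n (by rw [hram]; omega)
    · rw [hδ.norm_algebraNorm hquad hram hx]
      exact zpow_le_zpow_right₀ hp (by omega)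

theorem not_isTrivialOnK_comp_norm (hquad : Module.finrank ℚ_[p] K = 2) (hram : D.e = 2)
    (hδ : D.HasDifferentExponent δ) (hφ : IsTrivialOnQ p φ n) (hφ' : ¬IsTrivialOnQ p φ (n - 1))
    (hn : δ + 1 ≤ n) :
    ¬IsTrivialOnK D (φ.comp (Units.map (Algebra.norm ℚ_[p] : K →* ℚ_[p]))) (2 * n - δ - 1) := by
  intro htriv
  have hp : (1 : ℝ) ≤ p := by exact_mod_cast (Fact.out : p.Prime).one_lt.le
  obtain ⟨w, hw, hw1, hφw⟩ : ∃ w : (ℚ_[p])ˣ, ‖(w : ℚ_[p])‖ = 1 ∧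
      ‖(w : ℚ_[p]) - 1‖ ≤ (p : ℝ) ^ (-((n - 1 : ℕ) : ℤ)) ∧ φ w ≠ 1 := by
    simpa [IsTrivialOnQ] using hφ'
  have hw0 : (w : ℚ_[p]) - 1 ≠ 0 := by
    intro h
    rw [show w = 1 from Units.ext (sub_eq_zero.mp h), map_one] at hφw
    exact hφw rfl
  have hvw : (n : ℤ) - 1 ≤ ((w : ℚ_[p]) - 1).valuation := by
    rw [← Padic.norm_le_zpow_neg_iff hw0]
    simpa [Nat.cast_sub (by omega : 1 ≤ n)] using hw1
  obtain ⟨x, hvx, htr⟩ := hδ.exists_trace_eq hw0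
  have hx : x ≠ 0 := by
    rintro rfl
    exact hw0 (by rw [← htr, map_zero])
  rw [hram] at hvx
  obtain ⟨hu0, hvu⟩ := D.v_add_eq_of_lt one_ne_zero hx (by rw [D.v_one]; omega)
  set u := Units.mk0 (1 + x) hu0
  have hNu : (Units.map (Algebra.norm ℚ_[p] : K →* ℚ_[p]) u : ℚ_[p]) - w =
      Algebra.norm ℚ_[p] x := by
    rw [Units.coe_map, Units.val_mk0, Algebra.norm_one_add_of_finrank_eq_two hquad, htr]
    ring
  have hφu : φ (Units.map (Algebra.norm ℚ_[p] : K →* ℚ_[p]) u) = φ w := by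
    refine hφ.apply_eq_of_norm_sub_le hw ?_ ?_
    · rw [Units.coe_map, hδ.norm_algebraNorm hquad hram u.ne_zero, Units.val_mk0, hvu, D.v_one,
        neg_zero, zpow_zero]
    · rw [hNu, hδ.norm_algebraNorm hquad hram hx]
      exact zpow_le_zpow_right₀ hp (by omega)
  refine hφw (hφu ▸ htriv u ?_ (.inr ?_))
  · rw [Units.val_mk0, hvu, D.v_one]
  · rw [Units.val_mk0, add_sub_cancel_left]
    omega

theorem condK_comp_norm (hquad : Module.finrank ℚ_[p] K = 2) (hram : D.e = 2)
    (hδ : D.HasDifferentExponent δ) (hφ : ∃ i, IsTrivialOnQ p φ i) (hφδ : δ + 1 ≤ condQ p φ) :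
    condK D (φ.comp (Units.map (Algebra.norm ℚ_[p] : K →* ℚ_[p]))) = 2 * condQ p φ - δ := by
  have hcond : IsTrivialOnQ p φ (condQ p φ) := Nat.sInf_mem (s := {i | IsTrivialOnQ p φ i}) hφ
  have hcond' : ¬IsTrivialOnQ p φ (condQ p φ - 1) :=
    Nat.notMem_of_lt_sInf (s := {i | IsTrivialOnQ p φ i})
      (show condQ p φ - 1 < condQ p φ by omega)
  exact condK_eq_of_isTrivialOnK (isTrivialOnK_comp_norm hquad hram hδ hcond (by omega))
    (not_isTrivialOnK_comp_norm hquad hram hδ hcond hcond' hφδ)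

end RamifiedQuadratic

theorem conductor_norm_ramified_two_general (K : Type*) [Field K] [Algebra ℚ_[2] K]
    (hquad : Module.finrank ℚ_[2] K = 2) (D : PadicValData 2 K) (hram : D.e = 2)
    (δ : ℕ)
    (hδ : ∀ x : K, (∀ y : K, (y = 0 ∨ 0 ≤ D.v y) →
        ‖Algebra.trace ℚ_[2] K (x * y)‖ ≤ 1) ↔ (x = 0 ∨ -(δ : ℤ) ≤ D.v x))
    (φ : (ℚ_[2])ˣ →* ℂˣ) (hφ : ∃ i, IsTrivialOnQ 2 φ i) (hφδ : δ + 1 ≤ condQ 2 φ) :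
    (condK D (φ.comp (Units.map (Algebra.norm ℚ_[2] : K →* ℚ_[2]))) : ℤ)
        = 2 * condQ 2 φ - δ ∧
    condK D (φ.comp (Units.map (Algebra.norm ℚ_[2] : K →* ℚ_[2]))) % 2 = δ % 2 := by
  have h := condK_comp_norm hquad hram hδ hφ hφδ
  omega

/-- Let `K/ℚ₂` be ramified quadratic, `δ` the `2`-adic valuation of the
discriminant of `K/ℚ₂`, and `ω` the character of order `2` of `ℚ₂^×` with kernel
`N_{K/ℚ₂}(K^×)` and conductor `a(ω) = δ`.  Then for every character `φ` of `ℚ₂^×` with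
`a(φ) ≥ δ + 1` one has `a(φ ∘ N_{K/ℚ₂}) = 2·a(φ) − δ`; in particular `a(φ ∘ N_{K/ℚ₂})`
has the same parity as `δ`. -/
theorem conductor_norm_ramified_two (K : Type*) [Field K] [Algebra ℚ_[2] K]
    (hquad : Module.finrank ℚ_[2] K = 2) (D : PadicValData 2 K) (hram : D.e = 2)
    (δ : ℕ)
    (hδ : ∀ x : K, (∀ y : K, (y = 0 ∨ 0 ≤ D.v y) →
        ‖Algebra.trace ℚ_[2] K (x * y)‖ ≤ 1) ↔ (x = 0 ∨ -(δ : ℤ) ≤ D.v x))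
    (ω : (ℚ_[2])ˣ →* ℂˣ) (hω_ne : ω ≠ 1) (hω_sq : ω ^ 2 = 1)
    (hker : ∀ x : (ℚ_[2])ˣ, ω x = 1 ↔
      ∃ y : Kˣ, Units.map (Algebra.norm ℚ_[2] : K →* ℚ_[2]) y = x)
    (hωcond : condQ 2 ω = δ)
    (φ : (ℚ_[2])ˣ →* ℂˣ) (hφ : ∃ i, IsTrivialOnQ 2 φ i) (hφδ : δ + 1 ≤ condQ 2 φ) :
    (condK D (φ.comp (Units.map (Algebra.norm ℚ_[2] : K →* ℚ_[2]))) : ℤ)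
        = 2 * condQ 2 φ - δ ∧
    condK D (φ.comp (Units.map (Algebra.norm ℚ_[2] : K →* ℚ_[2]))) % 2 = δ % 2 :=
  conductor_norm_ramified_two_general K hquad D hram δ hδ φ hφ hφδ
end
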